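/- Let G be a connected even graph and let 𝒞 be a cycle decomposition of G whose cycle intersection graph CI(G) is simple (any two cycles of 𝒞 intersect in at most one vertex). Then for every spanning tree T of CI(G), ∇(G) ≤ (|E(CI(G))| − |V(CI(G))| + 1) + |MSF(T)|; that is, G can be decycled by removing the intersection vertices of G corresponding to the |E(CI(G))| − |V(CI(G))| + 1 edges deleted from CI(G) to obtain T, and then removing a set of vertices corresponding to a minimum spanning forest of the resulting tree. -/

import Mathlib

/-!
Let `F` be a minimum spanning forest of `T`, and let `S` consist of the vertex shared by the two
ends of each edge of `CI(G)` outside `T`, the vertex shared by the two ends of each edge of `F`,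
and one vertex of each cycle isolated in `F`. Then `|S| ≤ (|E(CI)| - |V(CI)| + 1) + |F|` and `S`
meets every cycle of `𝒞`.

A cycle of `G - S` cannot lie inside one cycle of `𝒞`: it would be all of it, and so meet `S`.
Hence it passes from a cycle `A` to a cycle `B ≠ A` at some vertex `v ∉ S`, so `AB` is an edge of
`T`. Going once around the cycle from `B` back to `A`, every other change of cycle happens at a
vertex `w ∉ S` other than `v`, hence along an edge of `T` whose shared vertex is `w`; as `CI(G)`
is simple, this edge is not `AB`. So `A` and `B` are joined in `T - AB`, which is impossible in a tree.
-/

open SimpleGraph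

variable {V : Type*}

/-- A graph is *even* if every vertex has even degree. -/
def IsEvenGraph (G : SimpleGraph V) : Prop :=
  ∀ v : V, Even (G.neighborSet v).ncard

/-- A subgraph is a *cycle* if it is connected and every one of its vertices has degree 2. -/
def IsCycleSubgraph {G : SimpleGraph V} (H : G.Subgraph) : Prop :=
  H.Connected ∧ ∀ v ∈ H.verts, (H.neighborSet v).ncard = 2

/-- A *cycle decomposition* of `G` is a family of cycle subgraphs such that every edge of `G`
lies in exactly one of them. -/
def IsCycleDecomposition (G : SimpleGraph V) (𝒞 : Set G.Subgraph) : Prop :=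
  (∀ C ∈ 𝒞, IsCycleSubgraph C) ∧ ∀ e ∈ G.edgeSet, ∃! C, C ∈ 𝒞 ∧ e ∈ SimpleGraph.Subgraph.edgeSet C

/-- The edges of the cycle intersection *multigraph* of a cycle decomposition `𝒞`:
one edge joining `C` and `C'` for each pair of distinct cycles `C ≠ C'` of `𝒞` and each
vertex `v` lying on both (the edge is labelled by `v`). -/
def CIEdges (G : SimpleGraph V) (𝒞 : Set G.Subgraph) : Set (Sym2 G.Subgraph × V) :=
  {p | ∃ C ∈ 𝒞, ∃ C' ∈ 𝒞, ∃ v : V, C ≠ C' ∧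
    v ∈ C.verts ∩ SimpleGraph.Subgraph.verts C' ∧ p = (s(C, C'), v)}

/-- The underlying simple graph of the cycle intersection graph of a cycle decomposition:
two distinct cycles are adjacent iff they share a vertex. -/
def CIGraph (G : SimpleGraph V) (𝒞 : Set G.Subgraph) : SimpleGraph 𝒞 where
  Adj C D := C ≠ D ∧ ((C : G.Subgraph).verts ∩ (D : G.Subgraph).verts).Nonempty
  symm := by
    constructor
    rintro C D ⟨h1, h2⟩
    exact ⟨h1.symm, by rwa [Set.inter_comm] at h2⟩
  loopless := by constructor; rintro C ⟨h1, _⟩; exact h1 rfl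

/-- The cycle intersection graph is *simple* iff any two distinct cycles of the decomposition
intersect in at most one vertex. -/
def CISimple (G : SimpleGraph V) (𝒞 : Set G.Subgraph) : Prop :=
  ∀ C ∈ 𝒞, ∀ D ∈ 𝒞, C ≠ D →
    ((C : G.Subgraph).verts ∩ (D : G.Subgraph).verts).ncard ≤ 1

/-- `S` is a decycling set of `G` iff `G - S` is acyclic. -/
def IsDecyclingSet (G : SimpleGraph V) (S : Set V) : Prop :=
  (G.induce Sᶜ).IsAcyclic

/-- The decycling number of `G`: the minimum size of a decycling set. -/
noncomputable def decyclingNumber (G : SimpleGraph V) : ℕ :=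
  sInf {n | ∃ S : Set V, IsDecyclingSet G S ∧ S.ncard = n}

/-- The *size* of a spanning forest: its number of edges plus its number of isolated vertices. -/
noncomputable def forestSize {W : Type*} (F : SimpleGraph W) : ℕ :=
  F.edgeSet.ncard + {v : W | ∀ w, ¬ F.Adj v w}.ncard

/-- The minimum size of a spanning forest of `H` (a spanning forest is an acyclic spanning
subgraph; note a subgraph `F ≤ H` on the same vertex type is automatically spanning). -/
noncomputable def MSF {W : Type*} (H : SimpleGraph W) : ℕ :=
  sInf {n | ∃ F ≤ H, F.IsAcyclic ∧ forestSize F = n}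

theorem Equivalence.rel_zero_of_rel_succ {β : Type*} {r : β → β → Prop} (hr : Equivalence r)
    {g : ℕ → β} {n : ℕ} (h : ∀ i, i + 1 < n → r (g i) (g (i + 1))) :
    ∀ i < n, r (g 0) (g i)
  | 0, _ => hr.refl _
  | i + 1, hi => hr.trans (hr.rel_zero_of_rel_succ h i (by omega)) (h i hi)

theorem Set.ncard_biUnion_le_of_subsingleton {ι α : Type*} {t : Set ι} (ht : t.Finite)
    {s : ι → Set α} (hs : ∀ i ∈ t, (s i).Subsingleton) : (⋃ i ∈ t, s i).ncard ≤ t.ncard := by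
  calc (⋃ i ∈ t, s i).ncard = (⋃ i ∈ ht.toFinset, s i).ncard := by simp
    _ ≤ ∑ i ∈ ht.toFinset, (s i).ncard := ht.toFinset.set_ncard_biUnion_le s
    _ ≤ ∑ _i ∈ ht.toFinset, 1 := Finset.sum_le_sum fun i hi =>
        have hsi := hs i (ht.mem_toFinset.mp hi)
        (Set.ncard_le_one hsi.finite).mpr hsi
    _ = t.ncard := by simp [Set.ncard_eq_toFinset_card t ht]

section CycleIntersection

variable {G : SimpleGraph V}

theorem IsCycleSubgraph.verts_subset_support {C : G.Subgraph} (hC : IsCycleSubgraph C) {u : V}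
    {p : G.Walk u u} (hp : p.IsCycle) (hpC : p.toSubgraph ≤ C) : C.verts ⊆ {v | v ∈ p.support} := by
  have closed : ∀ x y : C.verts, C.coe.Adj x y → x.1 ∈ p.support → y.1 ∈ p.support := by
    intro x y hxy hx
    have htwo : (C.neighborSet x).ncard = 2 := hC.2 x x.2
    have hnbr : p.toSubgraph.neighborSet x = C.neighborSet x :=
      Set.eq_of_subset_of_ncard_le (Subgraph.neighborSet_subset_of_subgraph hpC x)
        (by rw [htwo, hp.ncard_neighborSet_toSubgraph_eq_two hx])
        (Set.finite_of_ncard_pos (by omega))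
    have hxy' : y.1 ∈ p.toSubgraph.neighborSet x := hnbr ▸ hxy
    exact Walk.mem_support_of_adj_toSubgraph hxy'.symm
  have hu : u ∈ C.verts := hpC.1 p.start_mem_verts_toSubgraph
  suffices ∀ y, Relation.ReflTransGen C.coe.Adj ⟨u, hu⟩ y → y.1 ∈ p.support from
    fun x hx => this ⟨x, hx⟩ ((reachable_iff_reflTransGen _ _).mp (hC.1.preconnected _ _))
  intro y hy
  induction hy with
  | refl => exact p.start_mem_support
  | tail _ hadj ih => exact closed _ _ hadj ih

def sharedVerts (𝒞 : Set G.Subgraph) : Sym2 𝒞 → Set V :=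
  Sym2.lift ⟨fun C D => (C : G.Subgraph).verts ∩ (D : G.Subgraph).verts,
    fun _ _ => Set.inter_comm _ _⟩

variable {𝒞 : Set G.Subgraph}

@[simp]
theorem sharedVerts_mk (C D : 𝒞) :
    sharedVerts 𝒞 s(C, D) = (C : G.Subgraph).verts ∩ (D : G.Subgraph).verts :=
  rfl

theorem CISimple.subsingleton_sharedVerts [Finite V] (hs : CISimple G 𝒞) {e : Sym2 𝒞}
    (he : ¬ e.IsDiag) : (sharedVerts 𝒞 e).Subsingleton := by
  induction e using Sym2.ind with
  | h C D =>
    exact Set.ncard_le_one_iff_subsingleton.mp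
      (hs C C.2 D D.2 fun h => he (Sym2.mk_isDiag_iff.mpr (Subtype.ext h)))

theorem IsCycleDecomposition.exists_cycleOf [Nonempty 𝒞] (hdec : IsCycleDecomposition G 𝒞) :
    ∃ cycleOf : Sym2 V → 𝒞, ∀ e ∈ G.edgeSet, e ∈ (cycleOf e : G.Subgraph).edgeSet :=
  ⟨fun e => Classical.epsilon fun C : 𝒞 => e ∈ (C : G.Subgraph).edgeSet, fun e he =>
    let ⟨C, hC, heC⟩ := (hdec.2 e he).exists
    Classical.epsilon_spec (p := fun C : 𝒞 => e ∈ (C : G.Subgraph).edgeSet) ⟨⟨C, hC⟩, heC⟩⟩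

section CycleOf

variable (cycleOf : Sym2 V → 𝒞) {T : SimpleGraph 𝒞} {S : Set V}

theorem adj_cycleOf_of_ne (hc : ∀ e ∈ G.edgeSet, e ∈ (cycleOf e : G.Subgraph).edgeSet)
    (hST : ∀ e ∈ (CIGraph G 𝒞).edgeSet \ T.edgeSet, sharedVerts 𝒞 e ⊆ S)
    {a w z : V} (haw : G.Adj a w) (hwz : G.Adj w z) (hw : w ∉ S)
    (hne : cycleOf s(a, w) ≠ cycleOf s(w, z)) :
    T.Adj (cycleOf s(a, w)) (cycleOf s(w, z)) ∧
      w ∈ sharedVerts 𝒞 s(cycleOf s(a, w), cycleOf s(w, z)) := by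
  have hmem : w ∈ sharedVerts 𝒞 s(cycleOf s(a, w), cycleOf s(w, z)) :=
    ⟨(hc s(a, w) haw).snd_mem, (hc s(w, z) hwz).fst_mem⟩
  refine ⟨by_contra fun hT => hw (hST s(cycleOf s(a, w), cycleOf s(w, z)) ?_ hmem), hmem⟩
  exact ⟨⟨hne, w, hmem⟩, hT⟩

theorem SimpleGraph.Walk.IsCycle.cycleOf_snd_eq_cycleOf_penultimate [Finite V]
    (hs : CISimple G 𝒞) (hc : ∀ e ∈ G.edgeSet, e ∈ (cycleOf e : G.Subgraph).edgeSet)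
    (hST : ∀ e ∈ (CIGraph G 𝒞).edgeSet \ T.edgeSet, sharedVerts 𝒞 e ⊆ S) (hT : T.IsAcyclic)
    {v : V} {p : G.Walk v v} (hp : p.IsCycle) (hpS : ∀ w ∈ p.support, w ∉ S) :
    cycleOf s(v, p.snd) = cycleOf s(p.penultimate, v) := by
  by_contra hne
  obtain ⟨hadj, hv⟩ := adj_cycleOf_of_ne cycleOf hc hST (p.adj_penultimate hp.not_nil)
    (p.adj_snd hp.not_nil) (hpS v p.start_mem_support) (Ne.symm hne)
  set e := s(cycleOf s(p.penultimate, v), cycleOf s(v, p.snd))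
  let g i := cycleOf s(p.getVert i, p.getVert (i + 1))
  have step : ∀ i, i + 1 < p.length → (T.deleteEdges {e}).Reachable (g i) (g (i + 1)) := by
    intro i hi
    by_cases heq : g i = g (i + 1)
    · rw [heq]
    obtain ⟨hadj', hw⟩ := adj_cycleOf_of_ne cycleOf hc hST (p.adj_getVert_succ (by omega))
      (p.adj_getVert_succ hi) (hpS _ (p.getVert_mem_support _)) heq
    refine Adj.reachable ((deleteEdges_adj ..).mpr ⟨hadj', fun he => ?_⟩)
    rw [Set.mem_singleton_iff] at he
    have : p.getVert (i + 1) = v :=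
      hs.subsingleton_sharedVerts (T.not_isDiag_of_mem_edgeSet hadj) (he ▸ hw) hv
    rw [hp.getVert_endpoint_iff hi.le] at this
    omega
  -- Along `p`, the cycle of `𝒞` changes only across edges of `T` other than `e`, since the
  -- change happens at a vertex `≠ v`; so going around `p` joins the ends of `e` without it.
  apply isAcyclic_iff_forall_adj_isBridge.mp hT hadj
  have hlen := hp.three_le_length
  have := (reachable_is_equivalence _).rel_zero_of_rel_succ step (p.length - 1) (by omega)
  simpa [g, Nat.sub_add_cancel (by omega : 1 ≤ p.length)] using this.symm

theorem SimpleGraph.Walk.IsCycle.cycleOf_eq_of_adj_toSubgraph [Finite V]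
    (hs : CISimple G 𝒞) (hc : ∀ e ∈ G.edgeSet, e ∈ (cycleOf e : G.Subgraph).edgeSet)
    (hST : ∀ e ∈ (CIGraph G 𝒞).edgeSet \ T.edgeSet, sharedVerts 𝒞 e ⊆ S) (hT : T.IsAcyclic)
    {u : V} {p : G.Walk u u} (hp : p.IsCycle) (hpS : ∀ w ∈ p.support, w ∉ S) {a w z : V}
    (ha : p.toSubgraph.Adj w a) (hz : p.toSubgraph.Adj w z) :
    cycleOf s(a, w) = cycleOf s(w, z) := by
  classical
  have hw : w ∈ p.support := p.mem_support_of_adj_toSubgraph ha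
  have hrot := (hp.rotate hw).cycleOf_snd_eq_cycleOf_penultimate cycleOf hs hc hST hT
    (by simpa using hpS)
  have hnbr := (hp.rotate hw).neighborSet_toSubgraph_endpoint
  rw [Walk.toSubgraph_rotate] at hnbr
  have ha' : a ∈ p.toSubgraph.neighborSet w := ha
  have hz' : z ∈ p.toSubgraph.neighborSet w := hz
  rw [hnbr] at ha' hz'
  rcases ha' with rfl | rfl <;> rcases hz' with rfl | rfl <;> simp [Sym2.eq_swap, hrot]

theorem SimpleGraph.Walk.IsCycle.exists_mem_support_mem [Finite V]
    (hcyc : ∀ C ∈ 𝒞, IsCycleSubgraph C) (hs : CISimple G 𝒞)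
    (hc : ∀ e ∈ G.edgeSet, e ∈ (cycleOf e : G.Subgraph).edgeSet)
    (hST : ∀ e ∈ (CIGraph G 𝒞).edgeSet \ T.edgeSet, sharedVerts 𝒞 e ⊆ S) (hT : T.IsAcyclic)
    (hS𝒞 : ∀ C : 𝒞, ((C : G.Subgraph).verts ∩ S).Nonempty)
    {u : V} {p : G.Walk u u} (hp : p.IsCycle) : ∃ w ∈ p.support, w ∈ S := by
  by_contra! hpS
  let g i := cycleOf s(p.getVert i, p.getVert (i + 1))
  have hsame : ∀ i < p.length, g 0 = g i := eq_equivalence.rel_zero_of_rel_succ fun i hi =>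
    hp.cycleOf_eq_of_adj_toSubgraph cycleOf hs hc hST hT hpS
      (p.toSubgraph_adj_getVert (by omega)).symm (p.toSubgraph_adj_getVert hi)
  have hle : p.toSubgraph ≤ (g 0 : G.Subgraph) := by
    rw [Walk.toSubgraph_le_iff hp.not_nil]
    intro e he
    induction e using Sym2.ind with
    | h x y =>
      obtain ⟨i, hi, hxy⟩ := p.mk_mem_edges_iff_exists.mp he
      rw [hsame i hi, ← hxy]
      exact hc _ (hxy ▸ p.edges_subset_edgeSet he)
  obtain ⟨x, hxC, hxS⟩ := hS𝒞 (g 0)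
  exact hpS x ((hcyc _ (g 0).2).verts_subset_support hp hle hxC) hxS

end CycleOf

theorem isDecyclingSet_of_forall_isCycle {S : Set V}
    (h : ∀ u (p : G.Walk u u), p.IsCycle → ∃ w ∈ p.support, w ∈ S) : IsDecyclingSet G S := by
  intro v p hp
  let f := Embedding.induce (G := G) Sᶜ
  obtain ⟨w, hw, hwS⟩ :=
    h _ _ ((Walk.isCycle_map_iff_of_injective (f := f.toHom) f.injective).mpr hp)
  rw [Walk.support_map, List.mem_map] at hw
  obtain ⟨w', -, rfl⟩ := hw
  exact w'.2 hwS

theorem exists_transversal_ncard_le_forestSize [Finite V] (hs : CISimple G 𝒞)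
    (hne : ∀ C ∈ 𝒞, C.verts.Nonempty) {F : SimpleGraph 𝒞} (hF : F ≤ CIGraph G 𝒞) :
    ∃ Y : Set V, Y.ncard ≤ forestSize F ∧ ∀ C : 𝒞, ((C : G.Subgraph).verts ∩ Y).Nonempty := by
  let I := {C : 𝒞 | ∀ D, ¬ F.Adj C D}
  let rep (C : 𝒞) : V := (hne C C.2).some
  refine ⟨(⋃ e ∈ F.edgeSet, sharedVerts 𝒞 e) ∪ rep '' I, ?_, fun C => ?_⟩
  · calc _ ≤ (⋃ e ∈ F.edgeSet, sharedVerts 𝒞 e).ncard + (rep '' I).ncard :=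
          Set.ncard_union_le _ _
      _ ≤ F.edgeSet.ncard + I.ncard := add_le_add
          (Set.ncard_biUnion_le_of_subsingleton (Set.toFinite _) fun e he =>
            hs.subsingleton_sharedVerts (F.not_isDiag_of_mem_edgeSet he))
          (Set.ncard_image_le (Set.toFinite _))
  · by_cases hC : C ∈ I
    · exact ⟨rep C, (hne C C.2).some_mem, Or.inr (Set.mem_image_of_mem rep hC)⟩
    · obtain ⟨D, hCD⟩ : ∃ D, F.Adj C D := by simpa [I] using hC
      obtain ⟨v, hv⟩ := (hF hCD).2
      exact ⟨v, hv.1, Or.inl (Set.mem_biUnion (s := F.edgeSet) (x := s(C, D)) hCD hv)⟩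

end CycleIntersection

theorem exists_forestSize_eq_MSF {W : Type*} (H : SimpleGraph W) :
    ∃ F ≤ H, F.IsAcyclic ∧ forestSize F = MSF H :=
  Nat.sInf_mem (s := {n | ∃ F ≤ H, F.IsAcyclic ∧ forestSize F = n})
    ⟨_, ⊥, bot_le, isAcyclic_bot, rfl⟩

theorem decyclingNumber_le_cycleRank_add_MSF_of_CISimple_general [Fintype V]
    (G : SimpleGraph V)
    (𝒞 : Set G.Subgraph) (hdec : IsCycleDecomposition G 𝒞)
    (hsimple : CISimple G 𝒞) :
    ∀ T : SimpleGraph 𝒞, T ≤ CIGraph G 𝒞 → T.IsTree →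
      decyclingNumber G ≤
        ((CIGraph G 𝒞).edgeSet.ncard + 1 - Nat.card 𝒞) + MSF T := by
  intro T hTle hT
  have : Nonempty 𝒞 := hT.connected.nonempty
  obtain ⟨cycleOf, hc⟩ := hdec.exists_cycleOf
  obtain ⟨F, hFT, -, hF⟩ := exists_forestSize_eq_MSF T
  obtain ⟨Y, hY, hY𝒞⟩ := exists_transversal_ncard_le_forestSize hsimple
    (fun C hC => (hdec.1 C hC).1.nonempty) (hFT.trans hTle)
  set X := ⋃ e ∈ (CIGraph G 𝒞).edgeSet \ T.edgeSet, sharedVerts 𝒞 e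
  have hdecyc : IsDecyclingSet G (X ∪ Y) := isDecyclingSet_of_forall_isCycle fun _ _ hp =>
    hp.exists_mem_support_mem cycleOf hdec.1 hsimple hc
      (fun e he => (Set.subset_biUnion_of_mem he).trans Set.subset_union_left) hT.isAcyclic
      (fun C => (hY𝒞 C).mono (Set.inter_subset_inter_right _ Set.subset_union_right))
  have hX : X.ncard ≤ (CIGraph G 𝒞).edgeSet.ncard - T.edgeSet.ncard := by
    rw [← Set.ncard_sdiff (edgeSet_mono hTle)]
    exact Set.ncard_biUnion_le_of_subsingleton (Set.toFinite _) fun e he =>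
      hsimple.subsingleton_sharedVerts (not_isDiag_of_mem_edgeSet _ he.1)
  have hTcard : T.edgeSet.ncard + 1 = Nat.card 𝒞 := by
    simpa using (isTree_iff_connected_and_card.mp hT).2
  have hTle' : T.edgeSet.ncard ≤ (CIGraph G 𝒞).edgeSet.ncard :=
    Set.ncard_le_ncard (edgeSet_mono hTle)
  calc decyclingNumber G ≤ (X ∪ Y).ncard := Nat.sInf_le ⟨_, hdecyc, rfl⟩
    _ ≤ X.ncard + Y.ncard := Set.ncard_union_le _ _
    _ ≤ _ := by omega

/-- Let `G` be a connected even graph with a cycle decomposition `𝒞` whose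
cycle intersection graph is simple.  Then for every spanning tree `T` of `CI(G)`,
`∇(G) ≤ (|E(CI(G))| − |V(CI(G))| + 1) + |MSF(T)|`: removing the intersection vertices
corresponding to the `|E(CI(G))| − |V(CI(G))| + 1` edges deleted from `CI(G)` to obtain `T`
and then a vertex set corresponding to a minimum spanning forest of `T` decycles `G`.
(The cycle rank is written `|E| + 1 - |V|` to avoid truncated subtraction.) -/
theorem decyclingNumber_le_cycleRank_add_MSF_of_CISimple [Fintype V]
    (G : SimpleGraph V) (hconn : G.Connected) (heven : IsEvenGraph G)
    (𝒞 : Set G.Subgraph) (hdec : IsCycleDecomposition G 𝒞)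
    (hsimple : CISimple G 𝒞) :
    ∀ T : SimpleGraph 𝒞, T ≤ CIGraph G 𝒞 → T.IsTree →
      decyclingNumber G ≤
        ((CIGraph G 𝒞).edgeSet.ncard + 1 - Nat.card 𝒞) + MSF T :=
  decyclingNumber_le_cycleRank_add_MSF_of_CISimple_general G 𝒞 hdec hsimple
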